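/- arXiv:2208.12563 — 4 statements merged into one kernel-verified Lean document; each statement's English description precedes it below -/
import Mathlib

section
/- Let n ≥ 4 and let c be an edge-coloring of the complete graph K_n such that every 4-cycle in K_n receives at least 3 distinct colors on its edges. Then for every color i, each connected component of the graph formed by the edges of color i is a star or a triangle. -/
/-- If `n ≥ 4` and `c` is an edge-coloring of `K_n` in which every 4-cycle receives
at least 3 colors, then every connected component of every color class is a star
or a triangle. -/
theorem stmt_2 {κ : Type*} [DecidableEq κ] (n : ℕ) (hn : 4 ≤ n) (c : Sym2 (Fin n) → κ)
    (h4 : ∀ w x y z : Fin n, w ≠ x → w ≠ y → w ≠ z → x ≠ y → x ≠ z → y ≠ z →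
      3 ≤ ({c s(w, x), c s(x, y), c s(y, z), c s(z, w)} : Finset κ).card) :
    ∀ (i : κ)
      (C : (SimpleGraph.fromEdgeSet {e : Sym2 (Fin n) | c e = i}).ConnectedComponent),
      (∃ u ∈ C.supp, ∀ a b : Fin n,
          (SimpleGraph.fromEdgeSet {e : Sym2 (Fin n) | c e = i}).Adj a b →
          a ∈ C.supp → u = a ∨ u = b) ∨
      (∃ a b d : Fin n, a ≠ b ∧ a ≠ d ∧ b ≠ d ∧ C.supp = {a, b, d} ∧
        (SimpleGraph.fromEdgeSet {e : Sym2 (Fin n) | c e = i}).Adj a b ∧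
        (SimpleGraph.fromEdgeSet {e : Sym2 (Fin n) | c e = i}).Adj a d ∧
        (SimpleGraph.fromEdgeSet {e : Sym2 (Fin n) | c e = i}).Adj b d) := by
  intro i
  set G := SimpleGraph.fromEdgeSet {e : Sym2 (Fin n) | c e = i} with hG
  intro C
  have hadj : ∀ a b : Fin n, G.Adj a b → c s(a, b) = i := by
    intro a b hab
    rw [hG, SimpleGraph.fromEdgeSet_adj] at hab
    exact hab.1
  -- no path of length 3 in a color class
  have L : ∀ w x y z : Fin n, G.Adj w x → G.Adj x y → G.Adj y z →
      w = y ∨ x = z ∨ w = z := by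
    intro w x y z hwx hxy hyz
    by_contra hcon
    push_neg at hcon
    obtain ⟨hwy, hxz, hwz⟩ := hcon
    have h3 := h4 w x y z hwx.ne hwy hwz hxy.ne hxz hyz.ne
    rw [hadj w x hwx, hadj x y hxy, hadj y z hyz] at h3
    have h2 : ({i, i, i, c s(z, w)} : Finset κ).card ≤ 2 := by
      simp only [Finset.insert_idem]
      exact (Finset.card_insert_le _ _).trans (by simp)
    omega
  -- diameter ≤ 2 within components
  have R : ∀ u a : Fin n, G.Reachable u a →
      a = u ∨ G.Adj u a ∨ ∃ m, G.Adj u m ∧ G.Adj m a := by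
    intro u a hr
    obtain ⟨p⟩ := hr
    induction p with
    | nil => exact Or.inl rfl
    | cons h p ih =>
      rcases ih with rfl | hba | ⟨m, hbm, hma⟩
      · exact Or.inr (Or.inl h)
      · exact Or.inr (Or.inr ⟨_, h, hba⟩)
      · rcases L _ _ _ _ h hbm hma with rfl | rfl | rfl
        · exact Or.inr (Or.inl hma)
        · exact Or.inr (Or.inl h)
        · exact Or.inl rfl
  obtain ⟨v, hv⟩ := C.exists_rep
  have memsupp : ∀ a : Fin n, a ∈ C.supp ↔ G.connectedComponentMk a = C :=
    fun a => C.mem_supp_iff a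
  by_cases hE : ∃ p : Fin n × Fin n, G.Adj p.1 p.2 ∧ p.1 ∈ C.supp
  · obtain ⟨⟨u, w⟩, huw, hu⟩ := hE
    have adjsupp : ∀ a b : Fin n, G.Adj a b → a ∈ C.supp → b ∈ C.supp := by
      intro a b hab ha
      rw [memsupp] at ha ⊢
      rw [← ha]
      exact SimpleGraph.ConnectedComponent.sound hab.symm.reachable
    have hw : w ∈ C.supp := adjsupp u w huw hu
    have reach : ∀ a ∈ C.supp, ∀ b ∈ C.supp, G.Reachable a b := by
      intro a ha b hb
      rw [memsupp] at ha hb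
      exact SimpleGraph.ConnectedComponent.exact (ha.trans hb.symm)
    -- every edge of the component touches {u, w}
    have E : ∀ a b : Fin n, G.Adj a b → a ∈ C.supp →
        a = u ∨ a = w ∨ b = u ∨ b = w := by
      intro a b hab ha
      by_contra hcon
      push_neg at hcon
      obtain ⟨hau, haw, hbu, hbw⟩ := hcon
      rcases R u a (reach u hu a ha) with rfl | hua | ⟨m, hum, hma⟩
      · exact hau rfl
      · rcases L b a u w hab.symm hua.symm huw with h | h | h
        · exact hbu h
        · exact haw h
        · exact hbw h
      · by_cases hmw : m = w
        · subst hmw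
          rcases L u m a b hum hma hab with h | h | h
          · exact hau h.symm
          · exact hbw h.symm
          · exact hbu h.symm
        · rcases L w u m a huw.symm hum hma with h | h | h
          · exact hmw h.symm
          · exact hau h.symm
          · exact haw h.symm
    by_cases hT : ∃ x : Fin n, G.Adj u x ∧ G.Adj w x
    · -- triangle case
      obtain ⟨x, hux, hwx⟩ := hT
      right
      have nbu : ∀ a : Fin n, G.Adj u a → a = w ∨ a = x := by
        intro a hua
        rcases L a u w x hua.symm huw hwx with h | h | h
        · exact Or.inl h
        · exact (hux.ne h).elim
        · exact Or.inr h
      have nbw : ∀ a : Fin n, G.Adj w a → a = u ∨ a = x := by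
        intro a hwa
        rcases L a w u x hwa.symm huw.symm hux with h | h | h
        · exact Or.inl h
        · exact (hwx.ne h).elim
        · exact Or.inr h
      have nbx : ∀ a : Fin n, G.Adj x a → a = u ∨ a = w := by
        intro a hxa
        rcases L a x u w hxa.symm hux.symm huw with h | h | h
        · exact Or.inl h
        · exact (hwx.ne h.symm).elim
        · exact Or.inr h
      refine ⟨u, w, x, huw.ne, hux.ne, hwx.ne, ?_, huw, hux, hwx⟩
      ext a
      simp only [Set.mem_insert_iff, Set.mem_singleton_iff]
      constructor
      · intro ha
        rcases R u a (reach u hu a ha) with rfl | hua | ⟨m, hum, hma⟩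
        · exact Or.inl rfl
        · rcases nbu a hua with rfl | rfl
          · exact Or.inr (Or.inl rfl)
          · exact Or.inr (Or.inr rfl)
        · rcases nbu m hum with rfl | rfl
          · rcases nbw a hma with rfl | rfl
            · exact Or.inl rfl
            · exact Or.inr (Or.inr rfl)
          · rcases nbx a hma with rfl | rfl
            · exact Or.inl rfl
            · exact Or.inr (Or.inl rfl)
      · intro ha
        rcases ha with rfl | rfl | rfl
        · exact hu
        · exact hw
        · exact adjsupp u a hux hu
    · -- star case
      push_neg at hT
      left
      by_cases hX : ∃ x : Fin n, G.Adj w x ∧ x ≠ u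
      · -- center is w
        obtain ⟨x, hwx, hxu⟩ := hX
        refine ⟨w, hw, ?_⟩
        intro a b hab ha
        by_contra hcon
        push_neg at hcon
        obtain ⟨hwa, hwb⟩ := hcon
        rcases E a b hab ha with rfl | h | rfl | h
        · rcases L x w a b hwx.symm huw.symm hab with h | h | h
          · exact hxu h
          · exact hwb h
          · exact hT x (by rw [h]; exact hab) hwx
        · exact hwa h.symm
        · rcases L x w b a hwx.symm huw.symm hab.symm with h | h | h
          · exact hxu h
          · exact hwa h
          · exact hT x (by rw [h]; exact hab.symm) hwx
        · exact hwb h.symm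
      · -- center is u
        push_neg at hX
        refine ⟨u, hu, ?_⟩
        intro a b hab ha
        rcases E a b hab ha with rfl | rfl | rfl | rfl
        · exact Or.inl rfl
        · exact Or.inr (hX b hab).symm
        · exact Or.inr rfl
        · exact Or.inl (hX a hab.symm).symm
  · -- no edges: the component is a trivial star
    push_neg at hE
    left
    exact ⟨v, (memsupp v).mpr hv, fun a b hab ha => ((hE (a, b) hab) ha).elim⟩
end

section
/- For every n ≥ 4, any edge-coloring of K_n in which every 4-cycle receives at least 3 distinct colors uses at least (n-1)/2 colors. -/
open Finset

variable {n : ℕ}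

noncomputable def myLo : Sym2 (Fin n) → Fin n := Sym2.lift ⟨min, min_comm⟩
noncomputable def myHi : Sym2 (Fin n) → Fin n := Sym2.lift ⟨max, max_comm⟩

@[simp] lemma myLo_mk (a b : Fin n) : myLo s(a,b) = min a b := rfl
@[simp] lemma myHi_mk (a b : Fin n) : myHi s(a,b) = max a b := rfl

def Nbr (A : Finset (Sym2 (Fin n))) (v : Fin n) : Finset (Fin n) :=
  univ.filter (fun u => s(v,u) ∈ A)

lemma mem_Nbr {A : Finset (Sym2 (Fin n))} {v u : Fin n} : u ∈ Nbr A v ↔ s(v,u) ∈ A := by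
  simp [Nbr]

noncomputable def thd (A : Finset (Sym2 (Fin n))) (e : Sym2 (Fin n)) : Fin n :=
  if h : ((Nbr A (myLo e)).erase (myHi e)).Nonempty then h.choose else myLo e

noncomputable def emap (A : Finset (Sym2 (Fin n))) (e : Sym2 (Fin n)) : Fin n :=
  if (Nbr A (myLo e)).card ≤ 1 then myLo e
  else if (Nbr A (myHi e)).card ≤ 1 then myHi e
  else if myLo e < thd A e ∧ thd A e < myHi e then myHi e else myLo e

section main
variable {A : Finset (Sym2 (Fin n))}
  (hd : ∀ e ∈ A, ¬ e.IsDiag)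
  (hP4 : ∀ w x y z : Fin n, w ≠ x → w ≠ y → w ≠ z → x ≠ y → x ≠ z → y ≠ z →
      s(w,x) ∈ A → s(x,y) ∈ A → s(y,z) ∈ A → False)

include hd in
lemma ne_of_memA {u v : Fin n} (h : s(u,v) ∈ A) : u ≠ v := by
  intro huv; exact hd _ h (by simp [huv])

include hd hP4 in
lemma triangle_lemma {u v : Fin n} (he : s(u,v) ∈ A)
    (hu : 2 ≤ (Nbr A u).card) (hv : 2 ≤ (Nbr A v).card) :
    ∃ t, t ≠ u ∧ t ≠ v ∧ Nbr A u = {v, t} ∧ Nbr A v = {u, t} ∧ Nbr A t = {u, v} := by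
  have huv : u ≠ v := ne_of_memA hd he
  obtain ⟨u', hu'mem, hu'v⟩ := Finset.exists_mem_ne (s := Nbr A u) (by omega) v
  obtain ⟨v', hv'mem, hv'u⟩ := Finset.exists_mem_ne (s := Nbr A v) (by omega) u
  rw [mem_Nbr] at hu'mem hv'mem
  have hu'u : u' ≠ u := (ne_of_memA hd hu'mem).symm
  have hv'v : v' ≠ v := (ne_of_memA hd hv'mem).symm
  have htt : u' = v' := by
    by_contra hne
    exact hP4 u' u v v' hu'u hu'v hne huv (Ne.symm hv'u) (Ne.symm hv'v)
      (Sym2.eq_swap ▸ hu'mem) he hv'mem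
  subst htt
  refine ⟨u', hu'u, hu'v, ?_, ?_, ?_⟩
  · ext w
    simp only [mem_insert, mem_singleton]
    constructor
    · intro hw
      rw [mem_Nbr] at hw
      by_contra hc
      push_neg at hc
      obtain ⟨hwv, hwu'⟩ := hc
      exact hP4 w u v u' (Ne.symm (ne_of_memA hd hw)) hwv hwu' huv (Ne.symm hu'u)
        (Ne.symm hu'v) (Sym2.eq_swap ▸ hw) he hv'mem
    · rintro (rfl | rfl)
      · exact mem_Nbr.2 he
      · exact mem_Nbr.2 hu'mem
  · ext w
    simp only [mem_insert, mem_singleton]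
    constructor
    · intro hw
      rw [mem_Nbr] at hw
      by_contra hc
      push_neg at hc
      obtain ⟨hwu, hwu'⟩ := hc
      exact hP4 w v u u' (Ne.symm (ne_of_memA hd hw)) hwu hwu' (Ne.symm huv) hu'v.symm
        hu'u.symm (Sym2.eq_swap ▸ hw) (Sym2.eq_swap ▸ he) hu'mem
    · rintro (rfl | rfl)
      · exact mem_Nbr.2 (Sym2.eq_swap ▸ he)
      · exact mem_Nbr.2 hv'mem
  · ext w
    simp only [mem_insert, mem_singleton]
    constructor
    · intro hw
      rw [mem_Nbr] at hw
      by_contra hc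
      push_neg at hc
      obtain ⟨hwu, hwv⟩ := hc
      exact hP4 w u' u v (Ne.symm (ne_of_memA hd hw)) hwu hwv hu'u hu'v huv
        (Sym2.eq_swap ▸ hw) (Sym2.eq_swap ▸ hu'mem) he
    · rintro (rfl | rfl)
      · exact mem_Nbr.2 (Sym2.eq_swap ▸ hu'mem)
      · exact mem_Nbr.2 (Sym2.eq_swap ▸ hv'mem)


lemma order_contra {x y1 y2 : Fin n} (h12 : y1 ≠ y2) (hx1 : x ≠ y1) (hx2 : x ≠ y2)
    (H1 : (if min x y1 < y2 ∧ y2 < max x y1 then max x y1 else min x y1) = x)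
    (H2 : (if min x y2 < y1 ∧ y1 < max x y2 then max x y2 else min x y2) = x) : False := by
  simp only [min_def, max_def] at H1 H2
  split_ifs at H1 H2 <;>
    (simp only [Fin.lt_def, Fin.le_def, Fin.ext_iff, ne_eq, not_lt, not_and] at * ; omega)

lemma edge_rep {e : Sym2 (Fin n)} (hd' : ¬ e.IsDiag) :
    ∃ a b : Fin n, a < b ∧ e = s(a,b) := by
  induction e using Sym2.inductionOn with
  | hf a b =>
    rw [Sym2.isDiag_iff_proj_eq] at hd'
    rcases lt_or_gt_of_ne hd' with h | h
    · exact ⟨a, b, h, rfl⟩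
    · exact ⟨b, a, h, Sym2.eq_swap⟩

include hd hP4 in
lemma emap_cases {e : Sym2 (Fin n)} (he : e ∈ A) :
    ∃ x y : Fin n, e = s(x,y) ∧ emap A e = x ∧ x ≠ y ∧ y ∈ Nbr A x ∧
      ((Nbr A x).card = 1 ∨
       (∃ t, Nbr A x = {y, t} ∧ y ≠ t ∧ x ≠ t ∧
         (if min x y < t ∧ t < max x y then max x y else min x y) = x)) := by
  obtain ⟨a, b, hab, rfl⟩ := edge_rep (hd _ he)
  have hlo : myLo s(a,b) = a := by simp [min_eq_left hab.le]
  have hhi : myHi s(a,b) = b := by simp [max_eq_right hab.le]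
  have hbNa : b ∈ Nbr A a := mem_Nbr.2 he
  have haNb : a ∈ Nbr A b := mem_Nbr.2 (Sym2.eq_swap ▸ he)
  by_cases h1 : (Nbr A a).card ≤ 1
  · refine ⟨a, b, rfl, ?_, hab.ne, hbNa, Or.inl ?_⟩
    · rw [emap, hlo, hhi, if_pos h1]
    · have : 0 < (Nbr A a).card := card_pos.2 ⟨b, hbNa⟩
      omega
  · by_cases h2 : (Nbr A b).card ≤ 1
    · refine ⟨b, a, Sym2.eq_swap, ?_, hab.ne', haNb, Or.inl ?_⟩
      · rw [emap, hlo, hhi, if_neg h1, if_pos h2]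
      · have : 0 < (Nbr A b).card := card_pos.2 ⟨a, haNb⟩
        omega
    · push_neg at h1 h2
      obtain ⟨t, hta, htb, hNa, hNb, hNt⟩ := triangle_lemma hd hP4 he h1 h2
      have hth : thd A s(a,b) = t := by
        have hne : ((Nbr A (myLo s(a,b))).erase (myHi s(a,b))).Nonempty := by
          rw [hlo, hhi, hNa]
          exact ⟨t, by simp [htb]⟩
        rw [thd, dif_pos hne]
        have hch := hne.choose_spec
        obtain ⟨w, hw⟩ : ∃ w, hne.choose = w := ⟨_, rfl⟩
        rw [hw] at hch ⊢
        rw [hlo, hhi, hNa] at hch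
        rcases Finset.mem_erase.1 hch with ⟨hcb, hcm⟩
        rcases Finset.mem_insert.1 hcm with h | h
        · exact absurd h hcb
        · exact Finset.mem_singleton.1 h
      have hmin : min a b = a := min_eq_left hab.le
      have hmax : max a b = b := max_eq_right hab.le
      by_cases hcond : a < t ∧ t < b
      · refine ⟨b, a, Sym2.eq_swap, ?_, hab.ne', haNb, Or.inr ⟨t, hNb, Ne.symm hta, Ne.symm htb, ?_⟩⟩
        · rw [emap, hlo, hhi, if_neg (by omega), if_neg (by omega), hth, if_pos hcond]
        · rw [min_comm, max_comm, hmin, hmax, if_pos hcond]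
      · refine ⟨a, b, rfl, ?_, hab.ne, hbNa, Or.inr ⟨t, hNa, Ne.symm htb, Ne.symm hta, ?_⟩⟩
        · rw [emap, hlo, hhi, if_neg (by omega), if_neg (by omega), hth, if_neg hcond]
        · rw [hmin, hmax, if_neg hcond]

include hd hP4 in
lemma colorClass_card_le : A.card ≤ n := by
  have key : Set.InjOn (emap A) ↑A := by
    intro e1 h1 e2 h2 heq
    obtain ⟨x1, y1, he1, hm1, hxy1, hy1N, hc1⟩ := emap_cases hd hP4 (Finset.mem_coe.1 h1)
    obtain ⟨x2, y2, he2, hm2, hxy2, hy2N, hc2⟩ := emap_cases hd hP4 (Finset.mem_coe.1 h2)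
    rw [hm1, hm2] at heq
    subst heq
    rcases hc1 with hcard1 | ⟨t1, hN1, hyt1, hxt1, hif1⟩
    · rcases hc2 with hcard2 | ⟨t2, hN2, hyt2, hxt2, hif2⟩
      · have hy : y1 = y2 := Finset.card_le_one.1 (le_of_eq hcard1) _ hy1N _ hy2N
        rw [he1, he2, hy]
      · rw [hN2, card_pair hyt2] at hcard1
        omega
    · rcases hc2 with hcard2 | ⟨t2, hN2, hyt2, hxt2, hif2⟩
      · rw [hN1, card_pair hyt1] at hcard2
        omega
      · by_cases hyy : y1 = y2
        · rw [he1, he2, hyy]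
        · have h12 : y1 = t2 := by
            have hm : y1 ∈ ({y2, t2} : Finset (Fin n)) := hN2 ▸ hy1N
            rcases Finset.mem_insert.1 hm with h | h
            · exact absurd h hyy
            · exact Finset.mem_singleton.1 h
          have h21 : y2 = t1 := by
            have hm : y2 ∈ ({y1, t1} : Finset (Fin n)) := hN1 ▸ hy2N
            rcases Finset.mem_insert.1 hm with h | h
            · exact absurd h (Ne.symm hyy)
            · exact Finset.mem_singleton.1 h
          rw [← h21] at hif1
          rw [← h12] at hif2
          exact absurd (order_contra hyy hxy1 hxy2 hif1 hif2) id
  have hcc := Finset.card_le_card_of_injOn (emap A) (fun e _ => mem_univ (emap A e)) key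
  simpa using hcc

end main

/-- For `n ≥ 4`, any edge-coloring of `K_n` in which every 4-cycle receives at
least 3 colors uses at least `(n-1)/2` colors. -/
theorem stmt_3 {κ : Type*} [DecidableEq κ] (n : ℕ) (hn : 4 ≤ n) (c : Sym2 (Fin n) → κ)
    (h4 : ∀ w x y z : Fin n, w ≠ x → w ≠ y → w ≠ z → x ≠ y → x ≠ z → y ≠ z →
      3 ≤ ({c s(w, x), c s(x, y), c s(y, z), c s(z, w)} : Finset κ).card) :
    n - 1 ≤ 2 * (((⊤ : SimpleGraph (Fin n)).edgeFinset).image c).card := by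
  classical
  set E := ((⊤ : SimpleGraph (Fin n)).edgeFinset) with hE
  set K := E.image c with hK
  have hfiber : ∀ a : κ, (E.filter (fun e => c e = a)).card ≤ n := by
    intro a
    apply colorClass_card_le
    · intro e he
      rw [hE] at he
      exact SimpleGraph.not_isDiag_of_mem_edgeFinset (Finset.mem_filter.1 he).1
    · intro w x y z hwx hwy hwz hxy hxz hyz h1 h2 h3
      have hcard3 := h4 w x y z hwx hwy hwz hxy hxz hyz
      rw [Finset.mem_filter] at h1 h2 h3
      have hsub : ({c s(w,x), c s(x,y), c s(y,z), c s(z,w)} : Finset κ) ⊆ {a, c s(z,w)} := by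
        rw [h1.2, h2.2, h3.2]
        intro u hu
        simp only [Finset.mem_insert, Finset.mem_singleton] at hu ⊢
        tauto
      have hle2 : ({a, c s(z,w)} : Finset κ).card ≤ 2 :=
        (Finset.card_insert_le _ _).trans (by simp)
      have := Finset.card_le_card hsub
      omega
  have hsum : E.card = ∑ a ∈ K, (E.filter (fun e => c e = a)).card :=
    Finset.card_eq_sum_card_fiberwise (fun e he => Finset.mem_image_of_mem c he)
  have hle : E.card ≤ K.card * n := by
    rw [hsum]
    calc ∑ a ∈ K, (E.filter (fun e => c e = a)).card ≤ ∑ a ∈ K, n :=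
          Finset.sum_le_sum (fun a _ => hfiber a)
      _ = K.card * n := by rw [Finset.sum_const, smul_eq_mul]
  have hchoose : E.card = n * (n-1) / 2 := by
    rw [hE, SimpleGraph.card_edgeFinset_top_eq_card_choose_two, Fintype.card_fin,
      Nat.choose_two_right]
  rw [hchoose] at hle
  have hdvd : 2 ∣ n * (n-1) := by
    rcases Nat.even_or_odd n with h | h
    · exact Dvd.dvd.mul_right h.two_dvd _
    · have : Even (n - 1) := by
        rcases h with ⟨k, hk⟩
        exact ⟨k, by omega⟩
      exact Dvd.dvd.mul_left this.two_dvd n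
  have heq : n * (n-1) / 2 * 2 = n * (n-1) := Nat.div_mul_cancel hdvd
  have h2 : (n-1) * n ≤ (2 * K.card) * n := by
    calc (n-1) * n = n * (n-1) := mul_comm _ _
      _ = n * (n-1) / 2 * 2 := heq.symm
      _ ≤ K.card * n * 2 := by omega
      _ = (2 * K.card) * n := by ring
  exact Nat.le_of_mul_le_mul_right h2 (by omega)
end

section
/- Let c be a partial edge-coloring of K_n such that: (I) every color class consists of vertex-disjoint single edges and 2-edge paths; (II) for every triangle xyz with c(xy) = c(yz) and xz colored with color i, the vertex y is not incident to any edge of color i and xz is a single-edge component of color class i; and (III) every 4-cycle all of whose edges are colored receives at least 3 distinct colors. Then every copy of K_4 all of whose 6 edges are colored receives at least 5 distinct colors. -/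
/-- The number of neighbors of `u` in the color class `i` of the partial
edge-coloring `c`. -/
def colDeg {V κ : Type*} [Fintype V] [DecidableEq κ]
    (c : V → V → Option κ) (i : κ) (u : V) : ℕ :=
  (Finset.univ.filter fun w => c u w = some i).card

lemma colDeg_pos {V κ : Type*} [Fintype V] [DecidableEq κ]
    {c : V → V → Option κ} {i : κ} {u v : V} (h : c u v = some i) :
    1 ≤ colDeg c i u := by
  unfold colDeg
  exact Finset.card_pos.mpr ⟨v, Finset.mem_filter.mpr ⟨Finset.mem_univ v, h⟩⟩

lemma two_le_colDeg {V κ : Type*} [Fintype V] [DecidableEq κ]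
    {c : V → V → Option κ} {i : κ} {u v w : V}
    (h1 : c u v = some i) (h2 : c u w = some i) (hvw : v ≠ w) :
    2 ≤ colDeg c i u := by
  unfold colDeg
  exact Finset.one_lt_card.mpr ⟨v, Finset.mem_filter.mpr ⟨Finset.mem_univ v, h1⟩,
    w, Finset.mem_filter.mpr ⟨Finset.mem_univ w, h2⟩, hvw⟩

lemma three_le_colDeg {V κ : Type*} [Fintype V] [DecidableEq V] [DecidableEq κ]
    {c : V → V → Option κ} {i : κ} {u v w x : V}
    (h1 : c u v = some i) (h2 : c u w = some i) (h3 : c u x = some i)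
    (hvw : v ≠ w) (hvx : v ≠ x) (hwx : w ≠ x) :
    3 ≤ colDeg c i u := by
  have hsub : ({v, w, x} : Finset V) ⊆ Finset.univ.filter fun y => c u y = some i := by
    intro y hy
    simp only [Finset.mem_insert, Finset.mem_singleton] at hy
    rcases hy with rfl | rfl | rfl <;>
      exact Finset.mem_filter.mpr ⟨Finset.mem_univ _, by assumption⟩
  have hle := Finset.card_le_card hsub
  have hc : ({v, w, x} : Finset V).card = 3 := by
    rw [Finset.card_insert_of_notMem (by simp [hvw, hvx]),
        Finset.card_insert_of_notMem (by simp [hwx]), Finset.card_singleton]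
  unfold colDeg
  omega

lemma card5 {κ : Type*} [DecidableEq κ] {x1 x2 x3 x4 x5 : κ}
    (h12 : x1 ≠ x2) (h13 : x1 ≠ x3) (h14 : x1 ≠ x4) (h15 : x1 ≠ x5)
    (h23 : x2 ≠ x3) (h24 : x2 ≠ x4) (h25 : x2 ≠ x5)
    (h34 : x3 ≠ x4) (h35 : x3 ≠ x5) (h45 : x4 ≠ x5) :
    ({x1, x2, x3, x4, x5} : Finset κ).card = 5 := by
  rw [Finset.card_insert_of_notMem (by simp [h12, h13, h14, h15]),
      Finset.card_insert_of_notMem (by simp [h23, h24, h25]),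
      Finset.card_insert_of_notMem (by simp [h34, h35]),
      Finset.card_insert_of_notMem (by simp [h45]),
      Finset.card_singleton]

lemma pair_card_le {κ : Type*} [DecidableEq κ] (x y : κ) :
    ({x, y} : Finset κ).card ≤ 2 := by
  have := Finset.card_insert_le x ({y} : Finset κ)
  simpa using this


section SetHelpers
variable {κ : Type*} [DecidableEq κ]

lemma set_xyxy (x y : κ) : ({x, y, x, y} : Finset κ) = {x, y} := by
  ext t; simp only [Finset.mem_insert, Finset.mem_singleton]; tauto

lemma set_xxyy (x y : κ) : ({x, x, y, y} : Finset κ) = {x, y} := by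
  ext t; simp only [Finset.mem_insert, Finset.mem_singleton]; tauto

lemma set_tailA (p x y z w : κ) : ({p, x, y, z, w, p} : Finset κ) = {p, x, y, z, w} := by
  ext t; simp only [Finset.mem_insert, Finset.mem_singleton]; tauto

lemma set_tailB (p x y z w : κ) : ({p, p, x, y, z, w} : Finset κ) = {p, x, y, z, w} := by
  ext t; simp only [Finset.mem_insert, Finset.mem_singleton]; tauto

end SetHelpers

lemma p132546 {κ : Type*} [DecidableEq κ] (i₁ i₂ i₃ i₄ i₅ i₆ : κ) :
    ({i₁, i₃, i₂, i₅, i₄, i₆} : Finset κ) = {i₁, i₂, i₃, i₄, i₅, i₆} := by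
  ext t; simp only [Finset.mem_insert, Finset.mem_singleton]; tauto

lemma p145236 {κ : Type*} [DecidableEq κ] (i₁ i₂ i₃ i₄ i₅ i₆ : κ) :
    ({i₁, i₄, i₅, i₂, i₃, i₆} : Finset κ) = {i₁, i₂, i₃, i₄, i₅, i₆} := by
  ext t; simp only [Finset.mem_insert, Finset.mem_singleton]; tauto

lemma p154326 {κ : Type*} [DecidableEq κ] (i₁ i₂ i₃ i₄ i₅ i₆ : κ) :
    ({i₁, i₅, i₄, i₃, i₂, i₆} : Finset κ) = {i₁, i₂, i₃, i₄, i₅, i₆} := by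
  ext t; simp only [Finset.mem_insert, Finset.mem_singleton]; tauto

lemma p231645 {κ : Type*} [DecidableEq κ] (i₁ i₂ i₃ i₄ i₅ i₆ : κ) :
    ({i₂, i₃, i₁, i₆, i₄, i₅} : Finset κ) = {i₁, i₂, i₃, i₄, i₅, i₆} := by
  ext t; simp only [Finset.mem_insert, Finset.mem_singleton]; tauto

lemma p246135 {κ : Type*} [DecidableEq κ] (i₁ i₂ i₃ i₄ i₅ i₆ : κ) :
    ({i₂, i₄, i₆, i₁, i₃, i₅} : Finset κ) = {i₁, i₂, i₃, i₄, i₅, i₆} := by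
  ext t; simp only [Finset.mem_insert, Finset.mem_singleton]; tauto

lemma p213465 {κ : Type*} [DecidableEq κ] (i₁ i₂ i₃ i₄ i₅ i₆ : κ) :
    ({i₂, i₁, i₃, i₄, i₆, i₅} : Finset κ) = {i₁, i₂, i₃, i₄, i₅, i₆} := by
  ext t; simp only [Finset.mem_insert, Finset.mem_singleton]; tauto

lemma p264315 {κ : Type*} [DecidableEq κ] (i₁ i₂ i₃ i₄ i₅ i₆ : κ) :
    ({i₂, i₆, i₄, i₃, i₁, i₅} : Finset κ) = {i₁, i₂, i₃, i₄, i₅, i₆} := by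
  ext t; simp only [Finset.mem_insert, Finset.mem_singleton]; tauto

lemma p312564 {κ : Type*} [DecidableEq κ] (i₁ i₂ i₃ i₄ i₅ i₆ : κ) :
    ({i₃, i₁, i₂, i₅, i₆, i₄} : Finset κ) = {i₁, i₂, i₃, i₄, i₅, i₆} := by
  ext t; simp only [Finset.mem_insert, Finset.mem_singleton]; tauto

lemma p356124 {κ : Type*} [DecidableEq κ] (i₁ i₂ i₃ i₄ i₅ i₆ : κ) :
    ({i₃, i₅, i₆, i₁, i₂, i₄} : Finset κ) = {i₁, i₂, i₃, i₄, i₅, i₆} := by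
  ext t; simp only [Finset.mem_insert, Finset.mem_singleton]; tauto

lemma p365214 {κ : Type*} [DecidableEq κ] (i₁ i₂ i₃ i₄ i₅ i₆ : κ) :
    ({i₃, i₆, i₅, i₂, i₁, i₄} : Finset κ) = {i₁, i₂, i₃, i₄, i₅, i₆} := by
  ext t; simp only [Finset.mem_insert, Finset.mem_singleton]; tauto

lemma p451623 {κ : Type*} [DecidableEq κ] (i₁ i₂ i₃ i₄ i₅ i₆ : κ) :
    ({i₄, i₅, i₁, i₆, i₂, i₃} : Finset κ) = {i₁, i₂, i₃, i₄, i₅, i₆} := by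
  ext t; simp only [Finset.mem_insert, Finset.mem_singleton]; tauto

lemma p462513 {κ : Type*} [DecidableEq κ] (i₁ i₂ i₃ i₄ i₅ i₆ : κ) :
    ({i₄, i₆, i₂, i₅, i₁, i₃} : Finset κ) = {i₁, i₂, i₃, i₄, i₅, i₆} := by
  ext t; simp only [Finset.mem_insert, Finset.mem_singleton]; tauto

lemma p563412 {κ : Type*} [DecidableEq κ] (i₁ i₂ i₃ i₄ i₅ i₆ : κ) :
    ({i₅, i₆, i₃, i₄, i₁, i₂} : Finset κ) = {i₁, i₂, i₃, i₄, i₅, i₆} := by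
  ext t; simp only [Finset.mem_insert, Finset.mem_singleton]; tauto

/-- Matching coincidence case: `c a b = c d e`. -/
lemma lemA {κ : Type*} [DecidableEq κ] {n : ℕ} {c : Fin n → Fin n → Option κ}
    (hsymm : ∀ u v, c u v = c v u)
    (hI₁ : ∀ i u, colDeg c i u ≤ 2)
    (hI₂ : ∀ i a b d, c a b = some i → c b d = some i → a ≠ d →
      colDeg c i a = 1 ∧ colDeg c i d = 1 ∧ c a d ≠ some i)
    (hII : ∀ i j x y z, c x y = some j → c y z = some j → c x z = some i →
      colDeg c i y = 0 ∧ colDeg c i x = 1 ∧ colDeg c i z = 1)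
    (hIII : ∀ w x y z : Fin n, w ≠ x → w ≠ y → w ≠ z → x ≠ y → x ≠ z → y ≠ z →
      ∀ i₁ i₂ i₃ i₄, c w x = some i₁ → c x y = some i₂ → c y z = some i₃ →
        c z w = some i₄ → 3 ≤ ({i₁, i₂, i₃, i₄} : Finset κ).card)
    (a b d e : Fin n) (nab : a ≠ b) (nad : a ≠ d) (nae : a ≠ e)
    (nbd : b ≠ d) (nbe : b ≠ e) (nde : d ≠ e)
    (i₁ i₂ i₃ i₄ i₅ i₆ : κ)
    (h1 : c a b = some i₁) (h2 : c a d = some i₂) (h3 : c a e = some i₃)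
    (h4 : c b d = some i₄) (h5 : c b e = some i₅) (h6 : c d e = some i₆)
    (heq : i₁ = i₆) :
    5 ≤ ({i₁, i₂, i₃, i₄, i₅, i₆} : Finset κ).card := by
  rw [← heq] at h6
  have h1' := (hsymm b a).trans h1
  have h2' := (hsymm d a).trans h2
  have h3' := (hsymm e a).trans h3
  have h4' := (hsymm d b).trans h4
  have h5' := (hsymm e b).trans h5
  have h6' := (hsymm e d).trans h6
  have n12 : i₁ ≠ i₂ := by
    intro h; rw [← h] at h2 h2'
    obtain ⟨-, hd, -⟩ := hI₂ i₁ b a d h1' h2 nbd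
    have := two_le_colDeg h2' h6 nae
    omega
  have n13 : i₁ ≠ i₃ := by
    intro h; rw [← h] at h3 h3'
    obtain ⟨-, he, -⟩ := hI₂ i₁ b a e h1' h3 nbe
    have := two_le_colDeg h3' h6' nad
    omega
  have n14 : i₁ ≠ i₄ := by
    intro h; rw [← h] at h4 h4'
    obtain ⟨-, hd, -⟩ := hI₂ i₁ a b d h1 h4 nad
    have := two_le_colDeg h4' h6 nbe
    omega
  have n15 : i₁ ≠ i₅ := by
    intro h; rw [← h] at h5 h5'
    obtain ⟨-, he, -⟩ := hI₂ i₁ a b e h1 h5 nae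
    have := two_le_colDeg h5' h6' nbd
    omega
  have n23 : i₂ ≠ i₃ := by
    intro h; rw [← h] at h3
    obtain ⟨hA0, -, -⟩ := hII i₁ i₂ d a e h2' h3 h6
    have := colDeg_pos h1
    omega
  have n24 : i₂ ≠ i₄ := by
    intro h; rw [← h] at h4'
    obtain ⟨hD0, -, -⟩ := hII i₁ i₂ a d b h2 h4' h1
    have := colDeg_pos h6
    omega
  have n25 : i₂ ≠ i₅ := by
    intro h; rw [← h] at h5'
    have h3c := hIII a d e b nad nae nab nde nbd.symm nbe.symm i₂ i₁ i₂ i₁ h2 h6 h5' h1'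
    rw [set_xyxy] at h3c
    have := pair_card_le i₂ i₁
    omega
  have n34 : i₃ ≠ i₄ := by
    intro h; rw [← h] at h4'
    have h3c := hIII a e d b nae nad nab nde.symm nbe.symm nbd.symm i₃ i₁ i₃ i₁ h3 h6' h4' h1'
    rw [set_xyxy] at h3c
    have := pair_card_le i₃ i₁
    omega
  have n35 : i₃ ≠ i₅ := by
    intro h; rw [← h] at h5'
    obtain ⟨hE0, -, -⟩ := hII i₁ i₃ a e b h3 h5' h1
    have := colDeg_pos h6'
    omega
  have n45 : i₄ ≠ i₅ := by
    intro h; rw [← h] at h5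
    obtain ⟨hB0, -, -⟩ := hII i₁ i₄ d b e h4' h5 h6
    have := colDeg_pos h1'
    omega
  rw [← heq, set_tailA]
  exact (card5 n12 n13 n14 n15 n23 n24 n25 n34 n35 n45).ge

/-- Path coincidence case: `c a b = c a d`. -/
lemma lemB {κ : Type*} [DecidableEq κ] {n : ℕ} {c : Fin n → Fin n → Option κ}
    (hsymm : ∀ u v, c u v = c v u)
    (hI₁ : ∀ i u, colDeg c i u ≤ 2)
    (hI₂ : ∀ i a b d, c a b = some i → c b d = some i → a ≠ d →
      colDeg c i a = 1 ∧ colDeg c i d = 1 ∧ c a d ≠ some i)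
    (hII : ∀ i j x y z, c x y = some j → c y z = some j → c x z = some i →
      colDeg c i y = 0 ∧ colDeg c i x = 1 ∧ colDeg c i z = 1)
    (hIII : ∀ w x y z : Fin n, w ≠ x → w ≠ y → w ≠ z → x ≠ y → x ≠ z → y ≠ z →
      ∀ i₁ i₂ i₃ i₄, c w x = some i₁ → c x y = some i₂ → c y z = some i₃ →
        c z w = some i₄ → 3 ≤ ({i₁, i₂, i₃, i₄} : Finset κ).card)
    (a b d e : Fin n) (nab : a ≠ b) (nad : a ≠ d) (nae : a ≠ e)
    (nbd : b ≠ d) (nbe : b ≠ e) (nde : d ≠ e)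
    (i₁ i₂ i₃ i₄ i₅ i₆ : κ)
    (h1 : c a b = some i₁) (h2 : c a d = some i₂) (h3 : c a e = some i₃)
    (h4 : c b d = some i₄) (h5 : c b e = some i₅) (h6 : c d e = some i₆)
    (heq : i₁ = i₂) :
    5 ≤ ({i₁, i₂, i₃, i₄, i₅, i₆} : Finset κ).card := by
  rw [← heq] at h2
  have h1' := (hsymm b a).trans h1
  have h2' := (hsymm d a).trans h2
  have h3' := (hsymm e a).trans h3
  have h4' := (hsymm d b).trans h4
  have h5' := (hsymm e b).trans h5
  have h6' := (hsymm e d).trans h6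
  obtain ⟨hA0, hB1, hD1⟩ := hII i₄ i₁ b a d h1' h2 h4
  obtain ⟨hBp, hDp, -⟩ := hI₂ i₁ b a d h1' h2 nbd
  have n41 : i₄ ≠ i₁ := by
    intro h; rw [h] at hA0
    have := colDeg_pos h1
    omega
  have n43 : i₄ ≠ i₃ := by
    intro h; rw [h] at hA0
    have := colDeg_pos h3
    omega
  have n45 : i₄ ≠ i₅ := by
    intro h; rw [← h] at h5
    have := two_le_colDeg h4 h5 nde
    omega
  have n46 : i₄ ≠ i₆ := by
    intro h; rw [← h] at h6
    have := two_le_colDeg h4' h6 nbe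
    omega
  have n13 : i₁ ≠ i₃ := by
    intro h; rw [← h] at h3
    have hd := three_le_colDeg h1 h2 h3 nbd nbe nde
    have := hI₁ i₁ a
    omega
  have n15 : i₁ ≠ i₅ := by
    intro h; rw [← h] at h5
    have := two_le_colDeg h1' h5 nae
    omega
  have n16 : i₁ ≠ i₆ := by
    intro h; rw [← h] at h6
    have := two_le_colDeg h2' h6 nae
    omega
  have n35 : i₃ ≠ i₅ := by
    intro h; rw [← h] at h5'
    obtain ⟨-, hA1, -⟩ := hII i₁ i₃ a e b h3 h5' h1
    have := two_le_colDeg h1 h2 nbd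
    omega
  have n36 : i₃ ≠ i₆ := by
    intro h; rw [← h] at h6'
    obtain ⟨-, hA1, -⟩ := hII i₁ i₃ a e d h3 h6' h2
    have := two_le_colDeg h1 h2 nbd
    omega
  have n56 : i₅ ≠ i₆ := by
    intro h; rw [← h] at h6
    have h3c := hIII b a d e nab.symm nbd nbe nad nae nde i₁ i₁ i₅ i₅ h1' h2 h6 h5'
    rw [set_xxyy] at h3c
    have := pair_card_le i₁ i₅
    omega
  rw [← heq, set_tailB]
  exact (card5 n13 n41.symm n15 n16 (fun h => n43 h.symm) n35 n36 n45 n46 n56).ge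

/-- Let `c` be a partial edge-coloring of `K_n` such that:
(I) every color class consists of vertex-disjoint single edges and 2-edge paths
(each vertex has degree at most 2 in each color class, and each monochromatic
2-edge path `a–b–d` has both endpoints of degree 1 and is not closed into a
triangle of that color);
(II) for every triangle `x y z` with `c(xy) = c(yz)` and `xz` colored `i`, the
vertex `y` is incident to no edge of color `i`, and `xz` forms a single-edge
component of color class `i`;
(III) every 4-cycle whose edges are all colored receives at least 3 colors.
Then every `K_4` whose 6 edges are all colored receives at least 5 colors. -/
theorem stmt_12 {κ : Type*} [DecidableEq κ] (n : ℕ) (c : Fin n → Fin n → Option κ)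
    (hsymm : ∀ u v, c u v = c v u) (hloop : ∀ u, c u u = none)
    (hI₁ : ∀ i u, colDeg c i u ≤ 2)
    (hI₂ : ∀ i a b d, c a b = some i → c b d = some i → a ≠ d →
      colDeg c i a = 1 ∧ colDeg c i d = 1 ∧ c a d ≠ some i)
    (hII : ∀ i j x y z, c x y = some j → c y z = some j → c x z = some i →
      colDeg c i y = 0 ∧ colDeg c i x = 1 ∧ colDeg c i z = 1)
    (hIII : ∀ w x y z : Fin n, w ≠ x → w ≠ y → w ≠ z → x ≠ y → x ≠ z → y ≠ z →
      ∀ i₁ i₂ i₃ i₄, c w x = some i₁ → c x y = some i₂ → c y z = some i₃ →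
        c z w = some i₄ → 3 ≤ ({i₁, i₂, i₃, i₄} : Finset κ).card) :
    ∀ a b d e : Fin n, a ≠ b → a ≠ d → a ≠ e → b ≠ d → b ≠ e → d ≠ e →
      ∀ i₁ i₂ i₃ i₄ i₅ i₆, c a b = some i₁ → c a d = some i₂ → c a e = some i₃ →
        c b d = some i₄ → c b e = some i₅ → c d e = some i₆ →
        5 ≤ ({i₁, i₂, i₃, i₄, i₅, i₆} : Finset κ).card := by
  intro a b d e nab nad nae nbd nbe nde i₁ i₂ i₃ i₄ i₅ i₆ h1 h2 h3 h4 h5 h6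
  have s1 := (hsymm b a).trans h1
  have s2 := (hsymm d a).trans h2
  have s3 := (hsymm e a).trans h3
  have s4 := (hsymm d b).trans h4
  have s5 := (hsymm e b).trans h5
  have s6 := (hsymm e d).trans h6
  by_cases e12 : i₁ = i₂
  · exact lemB hsymm hI₁ hI₂ hII hIII a b d e nab nad nae nbd nbe nde
      i₁ i₂ i₃ i₄ i₅ i₆ h1 h2 h3 h4 h5 h6 e12
  by_cases e13 : i₁ = i₃
  · have H := lemB hsymm hI₁ hI₂ hII hIII a b e d nab nae nad nbe nbd nde.symm
      i₁ i₃ i₂ i₅ i₄ i₆ h1 h3 h2 h5 h4 s6 e13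
    rwa [p132546] at H
  by_cases e14 : i₁ = i₄
  · have H := lemB hsymm hI₁ hI₂ hII hIII b a d e nab.symm nbd nbe nad nae nde
      i₁ i₄ i₅ i₂ i₃ i₆ s1 h4 h5 h2 h3 h6 e14
    rwa [p145236] at H
  by_cases e15 : i₁ = i₅
  · have H := lemB hsymm hI₁ hI₂ hII hIII b a e d nab.symm nbe nbd nae nad nde.symm
      i₁ i₅ i₄ i₃ i₂ i₆ s1 h5 h4 h3 h2 s6 e15
    rwa [p154326] at H
  by_cases e16 : i₁ = i₆
  · exact lemA hsymm hI₁ hI₂ hII hIII a b d e nab nad nae nbd nbe nde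
      i₁ i₂ i₃ i₄ i₅ i₆ h1 h2 h3 h4 h5 h6 e16
  by_cases e23 : i₂ = i₃
  · have H := lemB hsymm hI₁ hI₂ hII hIII a d e b nad nae nab nde nbd.symm nbe.symm
      i₂ i₃ i₁ i₆ i₄ i₅ h2 h3 h1 h6 s4 s5 e23
    rwa [p231645] at H
  by_cases e24 : i₂ = i₄
  · have H := lemB hsymm hI₁ hI₂ hII hIII d a b e nad.symm nbd.symm nde nab nae nbe
      i₂ i₄ i₆ i₁ i₃ i₅ s2 s4 h6 h1 h3 h5 e24
    rwa [p246135] at H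
  by_cases e25 : i₂ = i₅
  · have H := lemA hsymm hI₁ hI₂ hII hIII a d b e nad nab nae nbd.symm nde nbe
      i₂ i₁ i₃ i₄ i₆ i₅ h2 h1 h3 s4 h6 h5 e25
    rwa [p213465] at H
  by_cases e26 : i₂ = i₆
  · have H := lemB hsymm hI₁ hI₂ hII hIII d a e b nad.symm nde nbd.symm nae nab nbe.symm
      i₂ i₆ i₄ i₃ i₁ i₅ s2 h6 s4 h3 h1 s5 e26
    rwa [p264315] at H
  by_cases e34 : i₃ = i₄
  · have H := lemA hsymm hI₁ hI₂ hII hIII a e b d nae nab nad nbe.symm nde.symm nbd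
      i₃ i₁ i₂ i₅ i₆ i₄ h3 h1 h2 s5 s6 h4 e34
    rwa [p312564] at H
  by_cases e35 : i₃ = i₅
  · have H := lemB hsymm hI₁ hI₂ hII hIII e a b d nae.symm nbe.symm nde.symm nab nad nbd
      i₃ i₅ i₆ i₁ i₂ i₄ s3 s5 s6 h1 h2 h4 e35
    rwa [p356124] at H
  by_cases e36 : i₃ = i₆
  · have H := lemB hsymm hI₁ hI₂ hII hIII e a d b nae.symm nde.symm nbe.symm nad nab nbd.symm
      i₃ i₆ i₅ i₂ i₁ i₄ s3 s6 s5 h2 h1 s4 e36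
    rwa [p365214] at H
  by_cases e45 : i₄ = i₅
  · have H := lemB hsymm hI₁ hI₂ hII hIII b d e a nbd nbe nab.symm nde nad.symm nae.symm
      i₄ i₅ i₁ i₆ i₂ i₃ h4 h5 s1 h6 s2 s3 e45
    rwa [p451623] at H
  by_cases e46 : i₄ = i₆
  · have H := lemB hsymm hI₁ hI₂ hII hIII d b e a nbd.symm nde nad.symm nbe nab.symm nae.symm
      i₄ i₆ i₂ i₅ i₁ i₃ s4 h6 s2 h5 s1 s3 e46
    rwa [p462513] at H
  by_cases e56 : i₅ = i₆
  · have H := lemB hsymm hI₁ hI₂ hII hIII e b d a nbe.symm nde.symm nae.symm nbd nab.symm nad.symm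
      i₅ i₆ i₃ i₄ i₁ i₂ s5 s6 s3 h4 s1 s2 e56
    rwa [p563412] at H
  have hc := card5 e12 e13 e14 e15 e23 e24 e25 e34 e35 e45
  have hsub : ({i₁, i₂, i₃, i₄, i₅} : Finset κ) ⊆ {i₁, i₂, i₃, i₄, i₅, i₆} := by
    intro x hx
    simp only [Finset.mem_insert, Finset.mem_singleton] at hx ⊢
    tauto
  calc (5 : ℕ) = ({i₁, i₂, i₃, i₄, i₅} : Finset κ).card := hc.symm
    _ ≤ _ := Finset.card_le_card hsub
end

section
/- There is an absolute constant C (e.g., C = 100) such that the following holds: for every graph L with maximum degree Δ ≥ 1 and every k ≥ C·Δ, there exists an edge-coloring of L with k colors that is proper (adjacent edges receive distinct colors) and in which every 4-cycle of L receives at least 3 distinct colors. -/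
open Finset SimpleGraph

lemma sym2_ne_of {V : Type} {a b c d : V} (h1 : a = c → b ≠ d) (h2 : a = d → b ≠ c) :
    s(a, b) ≠ s(c, d) := by
  intro h
  rcases Sym2.eq_iff.mp h with ⟨h3, h4⟩ | ⟨h3, h4⟩
  · exact h1 h3 h4
  · exact h2 h3 h4

/-- Greedy edge-coloring invariant: for any finite set `S` of (potential) edges, there is
a coloring proper on `S` in which no 4-cycle with all edges in `S` is 2-colored. -/
lemma greedy_step (V : Type) [Fintype V] [DecidableEq V] (L : SimpleGraph V)
    [DecidableRel L.Adj] (hΔ : 1 ≤ L.maxDegree) (k : ℕ) (hk : 100 * L.maxDegree ≤ k)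
    (S : Finset (Sym2 V)) :
    ∃ f : Sym2 V → Fin k,
      (∀ a b b' : V, L.Adj a b → L.Adj a b' → b ≠ b' → s(a, b) ∈ S → s(a, b') ∈ S →
        f s(a, b) ≠ f s(a, b')) ∧
      (∀ a b d e : V, L.Adj a b → L.Adj b d → L.Adj d e → L.Adj e a →
        a ≠ d → b ≠ e →
        s(a, b) ∈ S → s(b, d) ∈ S → s(d, e) ∈ S → s(e, a) ∈ S →
        f s(a, b) ≠ f s(d, e) ∨ f s(b, d) ≠ f s(e, a)) := by
  have hkpos : 0 < k := by nlinarith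
  induction S using Finset.induction_on with
  | empty =>
    exact ⟨fun _ => ⟨0, hkpos⟩, fun a b b' _ _ _ h => by simp at h,
      fun a b d e _ _ _ _ _ _ h => by simp at h⟩
  | @insert E S hES ih =>
    obtain ⟨f, hP, hC⟩ := ih
    induction E using Sym2.ind with
    | _ u v =>
    -- forbidden colors
    set F1 : Finset (Fin k) := (L.neighborFinset u).image (fun y => f s(u, y)) with hF1
    set F2 : Finset (Fin k) := (L.neighborFinset v).image (fun x => f s(v, x)) with hF2
    set F3 : Finset (Fin k) := (L.neighborFinset v).biUnion (fun x =>
      ((L.neighborFinset u).filter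
        (fun y => L.Adj x y ∧ s(u, y) ∈ S ∧ s(x, y) ∈ S ∧ f s(u, y) = f s(v, x))).image
        (fun y => f s(x, y))) with hF3
    have h1 : F1.card ≤ L.maxDegree := le_trans Finset.card_image_le (L.degree_le_maxDegree u)
    have h2 : F2.card ≤ L.maxDegree := le_trans Finset.card_image_le (L.degree_le_maxDegree v)
    have h3 : F3.card ≤ L.maxDegree := by
      refine le_trans Finset.card_biUnion_le (le_trans ?_ (L.degree_le_maxDegree v))
      have hb : ∀ x ∈ L.neighborFinset v,
          (((L.neighborFinset u).filter
            (fun y => L.Adj x y ∧ s(u, y) ∈ S ∧ s(x, y) ∈ S ∧ f s(u, y) = f s(v, x))).image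
            (fun y => f s(x, y))).card ≤ 1 := by
        intro x hx
        refine le_trans Finset.card_image_le (Finset.card_le_one.mpr ?_)
        intro y hy y' hy'
        simp only [Finset.mem_filter, SimpleGraph.mem_neighborFinset] at hy hy'
        by_contra hne
        exact hP u y y' hy.1 hy'.1 hne hy.2.2.1 hy'.2.2.1 (hy.2.2.2.2.trans hy'.2.2.2.2.symm)
      refine le_trans (Finset.sum_le_card_nsmul _ _ 1 hb) ?_
      rw [smul_eq_mul, mul_one]
      exact le_refl _
    have hcard : (F1 ∪ F2 ∪ F3).card < k := by
      have hA := Finset.card_union_le F2 F3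
      have hB := Finset.card_union_le F1 (F2 ∪ F3)
      have hA' := Finset.card_union_le F1 F2
      have hB' := Finset.card_union_le (F1 ∪ F2) F3
      omega
    obtain ⟨c, hc⟩ : ∃ c : Fin k, c ∉ F1 ∪ F2 ∪ F3 := by
      by_contra hcon
      push_neg at hcon
      have hsub : (Finset.univ : Finset (Fin k)) ⊆ F1 ∪ F2 ∪ F3 := fun x _ => hcon x
      have hcards := Finset.card_le_card hsub
      simp only [Finset.card_univ, Fintype.card_fin] at hcards
      omega
    have hc1 : c ∉ F1 := fun h => hc (by simp [h])
    have hc2 : c ∉ F2 := fun h => hc (by simp [h])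
    have hc3 : c ∉ F3 := fun h => hc (by simp [h])
    set f' : Sym2 V → Fin k := fun z => if z = s(u, v) then c else f z with hf'
    have hfnew : f' s(u, v) = c := by simp [hf']
    have hfold : ∀ z, z ≠ s(u, v) → f' z = f z := fun z hz => by simp [hf', hz]
    have hSold : ∀ z, z ∈ S → f' z = f z := fun z hz =>
      hfold z (fun h => hES (h ▸ hz))
    refine ⟨f', ?_, ?_⟩
    · -- properness
      intro a b b' hab hab' hbb' hm hm'
      have hne : s(a, b) ≠ s(a, b') :=
        sym2_ne_of (fun _ => hbb') (fun _ h => hab.ne h.symm)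
      rcases Finset.mem_insert.mp hm with h | h <;>
        rcases Finset.mem_insert.mp hm' with h' | h'
      · exact absurd (h.trans h'.symm) hne
      · -- s(a,b) = s(u,v), s(a,b') ∈ S
        rw [h, hfnew, hSold _ h']
        intro hcc
        rcases Sym2.eq_iff.mp h with ⟨rfl, rfl⟩ | ⟨rfl, rfl⟩
        · exact hc1 (by rw [hcc]; exact Finset.mem_image.mpr ⟨b', by simpa using hab', rfl⟩)
        · exact hc2 (by rw [hcc]; exact Finset.mem_image.mpr ⟨b', by simpa using hab', rfl⟩)
      · rw [h', hfnew, hSold _ h]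
        intro hcc
        rcases Sym2.eq_iff.mp h' with ⟨rfl, rfl⟩ | ⟨rfl, rfl⟩
        · exact hc1 (by rw [← hcc]; exact Finset.mem_image.mpr ⟨b, by simpa using hab, rfl⟩)
        · exact hc2 (by rw [← hcc]; exact Finset.mem_image.mpr ⟨b, by simpa using hab, rfl⟩)
      · rw [hSold _ h, hSold _ h']
        exact hP a b b' hab hab' hbb' h h'
    · -- 4-cycle condition
      have key : ∀ a b d e : V, L.Adj a b → L.Adj b d → L.Adj d e → L.Adj e a →
          a ≠ d → b ≠ e →
          s(a, b) = s(u, v) → s(b, d) ∈ S → s(d, e) ∈ S → s(e, a) ∈ S →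
          f' s(a, b) ≠ f' s(d, e) ∨ f' s(b, d) ≠ f' s(e, a) := by
        intro a b d e hab hbd hde hea had hbe hE hbd' hde' hea'
        rw [hE, hfnew, hSold _ hbd', hSold _ hde', hSold _ hea']
        by_cases hother : f s(b, d) = f s(e, a)
        · left
          intro hcc
          apply hc3
          rcases Sym2.eq_iff.mp hE with ⟨rfl, rfl⟩ | ⟨rfl, rfl⟩
          · -- now u = a, v = b (names u, v substituted away)
            refine Finset.mem_biUnion.mpr ⟨d, by simpa using hbd, ?_⟩
            rw [hcc]
            refine Finset.mem_image.mpr ⟨e, Finset.mem_filter.mpr ⟨by simpa using hea.symm,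
              hde, ?_, hde', ?_⟩, rfl⟩
            · rw [Sym2.eq_swap]; exact hea'
            · rw [Sym2.eq_swap]; exact hother.symm
          · -- now u = b, v = a
            refine Finset.mem_biUnion.mpr ⟨e, by simpa using hea.symm, ?_⟩
            rw [hcc]
            refine Finset.mem_image.mpr ⟨d, Finset.mem_filter.mpr ⟨by simpa using hbd,
              hde.symm, hbd', ?_, ?_⟩, by rw [Sym2.eq_swap]⟩
            · rw [Sym2.eq_swap]; exact hde'
            · rw [Sym2.eq_swap (a := a) (b := e)]; exact hother
        · right
          exact hother
      intro a b d e hab hbd hde hea had hbe hm1 hm2 hm3 hm4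
      rcases Finset.mem_insert.mp hm1 with h1 | h1
      · have e2 : s(b, d) ≠ s(a, b) :=
          sym2_ne_of (fun h => absurd h.symm hab.ne) (fun _ h => had h.symm)
        have e3 : s(d, e) ≠ s(a, b) :=
          sym2_ne_of (fun h => absurd h.symm had) (fun h => absurd h.symm hbd.ne)
        have e4 : s(e, a) ≠ s(a, b) :=
          sym2_ne_of (fun h => absurd h hea.ne) (fun h => absurd h.symm hbe)
        have hm2' : s(b, d) ∈ S := (Finset.mem_insert.mp hm2).resolve_left (h1 ▸ e2)
        have hm3' : s(d, e) ∈ S := (Finset.mem_insert.mp hm3).resolve_left (h1 ▸ e3)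
        have hm4' : s(e, a) ∈ S := (Finset.mem_insert.mp hm4).resolve_left (h1 ▸ e4)
        exact key a b d e hab hbd hde hea had hbe h1 hm2' hm3' hm4'
      · rcases Finset.mem_insert.mp hm2 with h2 | h2
        · have e3 : s(d, e) ≠ s(b, d) :=
            sym2_ne_of (fun h => absurd h.symm hbd.ne) (fun _ h => hbe h.symm)
          have e4 : s(e, a) ≠ s(b, d) :=
            sym2_ne_of (fun h => absurd h.symm hbe) (fun _ => hab.ne)
          have hm3' : s(d, e) ∈ S := (Finset.mem_insert.mp hm3).resolve_left (h2 ▸ e3)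
          have hm4' : s(e, a) ∈ S := (Finset.mem_insert.mp hm4).resolve_left (h2 ▸ e4)
          rcases key b d e a hbd hde hea hab hbe had.symm h2 hm3' hm4' h1 with h | h
          · exact Or.inr h
          · exact Or.inl h.symm
        · rcases Finset.mem_insert.mp hm3 with h3 | h3
          · have e4 : s(e, a) ≠ s(d, e) :=
              sym2_ne_of (fun h => absurd h.symm hde.ne) (fun _ => had)
            have hm4' : s(e, a) ∈ S := (Finset.mem_insert.mp hm4).resolve_left (h3 ▸ e4)
            rcases key d e a b hde hea hab hbd had.symm hbe.symm h3 hm4' h1 h2 with h | h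
            · exact Or.inl h.symm
            · exact Or.inr h.symm
          · rcases Finset.mem_insert.mp hm4 with h4 | h4
            · rcases key e a b d hea hab hbd hde hbe.symm had h4 h1 h2 h3 with h | h
              · exact Or.inr h.symm
              · exact Or.inl h
            · rw [hSold _ h1, hSold _ h2, hSold _ h3, hSold _ h4]
              exact hC a b d e hab hbd hde hea had hbe h1 h2 h3 h4

/-- There is an absolute constant `C` (e.g. `C = 100`) such that every graph `L`
with maximum degree `Δ ≥ 1` admits, for every `k ≥ C·Δ`, a proper edge-coloring
with `k` colors in which every 4-cycle receives at least 3 distinct colors. -/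
theorem stmt_15 :
    ∃ C : ℕ, C = 100 ∧
      ∀ (V : Type) [Fintype V] [DecidableEq V] (L : SimpleGraph V)
        [DecidableRel L.Adj], 1 ≤ L.maxDegree →
        ∀ k : ℕ, C * L.maxDegree ≤ k →
          ∃ f : Sym2 V → Fin k,
            (∀ a b b' : V, L.Adj a b → L.Adj a b' → b ≠ b' →
              f s(a, b) ≠ f s(a, b')) ∧
            (∀ a b d e : V, a ≠ b → a ≠ d → a ≠ e → b ≠ d → b ≠ e → d ≠ e →
              L.Adj a b → L.Adj b d → L.Adj d e → L.Adj e a →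
              3 ≤ ({f s(a, b), f s(b, d), f s(d, e), f s(e, a)} : Finset (Fin k)).card) := by
  refine ⟨100, rfl, ?_⟩
  intro V _ _ L _ hΔ k hk
  obtain ⟨f, hP, hC⟩ := greedy_step V L hΔ k hk L.edgeFinset
  have hmem : ∀ {x y : V}, L.Adj x y → s(x, y) ∈ L.edgeFinset := fun h =>
    SimpleGraph.mem_edgeFinset.mpr ((SimpleGraph.mem_edgeSet L).mpr h)
  refine ⟨f, fun a b b' hab hab' hbb' =>
    hP a b b' hab hab' hbb' (hmem hab) (hmem hab'), ?_⟩
  intro a b d e hab' had' hae' hbd' hbe' hde' hab hbd hde hea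
  have h12 : f s(a, b) ≠ f s(b, d) := by
    have := hP b a d hab.symm hbd had' (hmem hab.symm) (hmem hbd)
    rwa [Sym2.eq_swap (a := b) (b := a)] at this
  have h23 : f s(b, d) ≠ f s(d, e) := by
    have := hP d b e hbd.symm hde hbe' (hmem hbd.symm) (hmem hde)
    rwa [Sym2.eq_swap (a := d) (b := b)] at this
  have h34 : f s(d, e) ≠ f s(e, a) := by
    have := hP e d a hde.symm hea (fun h => had' h.symm) (hmem hde.symm) (hmem hea)
    rwa [Sym2.eq_swap (a := e) (b := d)] at this
  have h14 : f s(a, b) ≠ f s(e, a) := by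
    have := hP a b e hab hea.symm hbe' (hmem hab) (hmem hea.symm)
    rwa [Sym2.eq_swap (a := a) (b := e)] at this
  have hdisj : f s(a, b) ≠ f s(d, e) ∨ f s(b, d) ≠ f s(e, a) :=
    hC a b d e hab hbd hde hea had' hbe' (hmem hab) (hmem hbd) (hmem hde) (hmem hea)
  rcases hdisj with h13 | h24
  · calc (3 : ℕ) = ({f s(a, b), f s(b, d), f s(d, e)} : Finset (Fin k)).card := by
          rw [Finset.card_insert_of_notMem (by simp [h12, h13]),
            Finset.card_insert_of_notMem (by simp [h23]), Finset.card_singleton]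
      _ ≤ _ := Finset.card_le_card (by intro x; simp; tauto)
  · calc (3 : ℕ) = ({f s(b, d), f s(d, e), f s(e, a)} : Finset (Fin k)).card := by
          rw [Finset.card_insert_of_notMem (by simp [h23, h24]),
            Finset.card_insert_of_notMem (by simp [h34]), Finset.card_singleton]
      _ ≤ _ := Finset.card_le_card (by intro x; simp; tauto)
end
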